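/- arXiv:1910.03365 — 2 statements merged into one kernel-verified Lean document; each statement's English description precedes it below -/
import Mathlib

section
/- Let A ∈ ℂ^{M×L} be the matrix whose columns are the steering vectors a_θ for θ in a finite set Θ of size L, and suppose rank(A) = L. Let c_θ > 0 for each θ ∈ Θ, and suppose δ satisfies 0 ≤ δ ≤ (min_θ c_θ)/√(1ᴴ(AᴴA)⁻¹1), where 1 ∈ ℂ^L is the all-ones vector. Then there exists w ∈ ℂ^M satisfying |wᴴa_θ − 1| + δ‖w‖ ≤ c_θ for all θ ∈ Θ (namely w = A(AᴴA)⁻¹1). -/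
/-!
Take `w = A (AᴴA)⁻¹ 1`. Then `Aᴴ w = 1`, i.e. `wᴴ a_θ = 1` for every `θ`, and
`‖w‖² = wᴴ A (AᴴA)⁻¹ 1 = 1ᴴ (AᴴA)⁻¹ 1`, so the hypothesis on `δ` says exactly `δ ‖w‖ ≤ min_θ c_θ`.
-/

open Matrix

namespace Matrix

variable {m n : Type*} [Fintype m]

theorem transpose_apply_dotProduct_star {R : Type*} [CommRing R] [StarRing R] (A : Matrix m n R)
    (w : m → R) (j : n) : Aᵀ j ⬝ᵥ star w = star ((Aᴴ *ᵥ w) j) := by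
  simp [mulVec, dotProduct, star_sum, mul_comm]

variable [Fintype n]

theorem isUnit_of_rank_eq_card [DecidableEq n] {K : Type*} [Field K] {B : Matrix n n K}
    (h : B.rank = Fintype.card n) : IsUnit B := by
  rw [← mulVec_surjective_iff_isUnit]
  refine (LinearMap.range_eq_top (f := B.mulVecLin)).1 ?_
  exact Submodule.eq_top_of_finrank_eq (by simpa [rank] using h)

theorem isUnit_det_conjTranspose_mul_self [DecidableEq n] {K : Type*} [Field K] [PartialOrder K]
    [StarRing K] [StarOrderedRing K] {A : Matrix m n K} (h : A.rank = Fintype.card n) :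
    IsUnit (Aᴴ * A).det :=
  (isUnit_iff_isUnit_det _).1 <| isUnit_of_rank_eq_card <| (rank_conjTranspose_mul_self A).trans h

variable {R : Type*} [CommRing R] [StarRing R] (A : Matrix m n R) [DecidableEq n]

/-- When `AᴴA` is invertible, this is the solution of `Aᴴ w = b` of least norm. -/
noncomputable def minNormSolution (b : n → R) : m → R :=
  A *ᵥ ((Aᴴ * A)⁻¹ *ᵥ b)

variable {A}

theorem conjTranspose_mulVec_minNormSolution (hA : IsUnit (Aᴴ * A).det) (b : n → R) :
    Aᴴ *ᵥ A.minNormSolution b = b := by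
  rw [minNormSolution, mulVec_mulVec, mulVec_mulVec, mul_nonsing_inv _ hA, one_mulVec]

theorem star_minNormSolution_dotProduct_self (hA : IsUnit (Aᴴ * A).det) (b : n → R) :
    star (A.minNormSolution b) ⬝ᵥ A.minNormSolution b = star b ⬝ᵥ (Aᴴ * A)⁻¹ *ᵥ b := by
  nth_rewrite 2 [minNormSolution]
  rw [dotProduct_mulVec, ← conjTranspose_conjTranspose A, ← star_mulVec,
    conjTranspose_conjTranspose, conjTranspose_mulVec_minNormSolution hA]

end Matrix

theorem stmt_4_general (M L : ℕ)
    (a : Fin L → EuclideanSpace ℂ (Fin M))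
    (A : Matrix (Fin M) (Fin L) ℂ) (hA : ∀ i θ, A i θ = a θ i)
    (hrank : A.rank = L)
    (c : Fin L → ℝ)
    (δ : ℝ)
    (hδ : δ ≤ (⨅ θ, c θ) /
      Real.sqrt ((star (1 : Fin L → ℂ) ⬝ᵥ (Aᴴ * A)⁻¹.mulVec (1 : Fin L → ℂ)).re)) :
    ∃ w : EuclideanSpace ℂ (Fin M),
      ∀ θ, ‖(inner ℂ w (a θ) : ℂ) - 1‖ + δ * ‖w‖ ≤ c θ := by
  open ComplexOrder in
  have hdet : IsUnit (Aᴴ * A).det := isUnit_det_conjTranspose_mul_self (by simpa using hrank)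
  set w := WithLp.toLp 2 (A.minNormSolution 1)
  have hinner (θ : Fin L) : inner ℂ w (a θ) = 1 := by
    have hcol : a θ = WithLp.toLp 2 (Aᵀ θ) := by ext i; simp [hA]
    rw [hcol, EuclideanSpace.inner_toLp_toLp, transpose_apply_dotProduct_star,
      conjTranspose_mulVec_minNormSolution hdet, Pi.one_apply, star_one]
  have hnorm : ‖w‖ = √((star (1 : Fin L → ℂ) ⬝ᵥ (Aᴴ * A)⁻¹ *ᵥ (1 : Fin L → ℂ)).re) := by
    rw [← star_minNormSolution_dotProduct_self hdet, norm_eq_sqrt_re_inner (𝕜 := ℂ),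
      EuclideanSpace.inner_toLp_toLp, dotProduct_comm]
    rfl
  refine ⟨w, fun θ => ?_⟩
  have hw : 0 < ‖w‖ := norm_pos_iff.2 fun h => by simpa [h] using hinner θ
  rw [hinner θ, sub_self, norm_zero, zero_add, ← le_div_iff₀ hw]
  rw [← hnorm] at hδ
  exact hδ.trans (div_le_div_of_nonneg_right (ciInf_le (Finite.bddBelow_range c) θ) hw.le)

theorem stmt_4 (M L : ℕ) (hM : 0 < M) (hL : 0 < L) (hLM : L ≤ M)
    (a : Fin L → EuclideanSpace ℂ (Fin M))
    (A : Matrix (Fin M) (Fin L) ℂ) (hA : ∀ i θ, A i θ = a θ i)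
    (hrank : A.rank = L)
    (c : Fin L → ℝ) (hc : ∀ θ, 0 < c θ)
    (δ : ℝ) (hδ0 : 0 ≤ δ)
    (hδ : δ ≤ (⨅ θ, c θ) /
      Real.sqrt ((star (1 : Fin L → ℂ) ⬝ᵥ (Aᴴ * A)⁻¹.mulVec (1 : Fin L → ℂ)).re)) :
    ∃ w : EuclideanSpace ℂ (Fin M),
      ∀ θ, ‖(inner ℂ w (a θ) : ℂ) - 1‖ + δ * ‖w‖ ≤ c θ :=
  stmt_4_general M L a A hA hrank c δ hδ
end

section
/- Let R be a Hermitian positive definite M×M complex matrix and a ∈ ℂ^M nonzero. Then w* = R⁻¹a / (aᴴR⁻¹a) satisfies wᴴa = 1 and minimizes wᴴRw over all w ∈ ℂ^M with wᴴa = 1, with minimum value 1/(aᴴR⁻¹a). -/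
/-!
With `c = aᴴR⁻¹a > 0`, the weight `w* = c⁻¹ R⁻¹a` satisfies `R w* = c⁻¹ a`. So for every
feasible `w` the difference `v = w - w*` is `R`-orthogonal to `w*`, as `vᴴR w* = c⁻¹ vᴴa = 0`,
whence `wᴴRw = w*ᴴRw* + vᴴRv ≥ w*ᴴRw*`; and `w*ᴴRw* = c⁻¹ w*ᴴa = c⁻¹`.
-/

open Matrix
open scoped ComplexOrder

namespace Matrix

variable {n 𝕜 : Type*} [Fintype n] [CommRing 𝕜] [StarRing 𝕜]

lemma IsHermitian.star_dotProduct_mulVec_comm {B : Matrix n n 𝕜} (hB : B.IsHermitian)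
    (x y : n → 𝕜) : star x ⬝ᵥ B *ᵥ y = star (star y ⬝ᵥ B *ᵥ x) := by
  rw [star_dotProduct, star_mulVec, ← dotProduct_mulVec, hB.eq]

lemma IsHermitian.dotProduct_mulVec_add_of_orthogonal {B : Matrix n n 𝕜} (hB : B.IsHermitian)
    {u v : n → 𝕜} (huv : star v ⬝ᵥ B *ᵥ u = 0) :
    star (u + v) ⬝ᵥ B *ᵥ (u + v) = star u ⬝ᵥ B *ᵥ u + star v ⬝ᵥ B *ᵥ v := by
  have hvu : star u ⬝ᵥ B *ᵥ v = 0 := by rw [hB.star_dotProduct_mulVec_comm, huv, star_zero]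
  rw [star_add, mulVec_add, add_dotProduct, dotProduct_add, dotProduct_add, huv, hvu]
  ring

lemma PosSemidef.dotProduct_mulVec_le_of_mulVec_eq_smul [PartialOrder 𝕜]
    [IsOrderedAddMonoid 𝕜] {B : Matrix n n 𝕜} (hB : B.PosSemidef) {u a : n → 𝕜} {k : 𝕜}
    (hu : B *ᵥ u = k • a) {w : n → 𝕜} (hw : star w ⬝ᵥ a = star u ⬝ᵥ a) :
    star u ⬝ᵥ B *ᵥ u ≤ star w ⬝ᵥ B *ᵥ w := by
  have horth : star (w - u) ⬝ᵥ B *ᵥ u = 0 := by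
    rw [hu, dotProduct_smul, star_sub, sub_dotProduct, hw, sub_self, smul_zero]
  have hsplit := hB.isHermitian.dotProduct_mulVec_add_of_orthogonal horth
  rw [add_sub_cancel] at hsplit
  rw [hsplit]
  exact le_add_of_nonneg_right (hB.dotProduct_mulVec_nonneg _)

end Matrix

theorem stmt_14_general (M : ℕ) (R : Matrix (Fin M) (Fin M) ℂ)
    (hR : R.PosDef) (a : Fin M → ℂ) (ha : a ≠ 0)
    (wstar : Fin M → ℂ)
    (hw : wstar = (star a ⬝ᵥ R⁻¹.mulVec a)⁻¹ • R⁻¹.mulVec a) :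
    star wstar ⬝ᵥ a = 1 ∧
    (∀ w : Fin M → ℂ, star w ⬝ᵥ a = 1 →
      (star wstar ⬝ᵥ R.mulVec wstar).re ≤ (star w ⬝ᵥ R.mulVec w).re) ∧
    star wstar ⬝ᵥ R.mulVec wstar = (star a ⬝ᵥ R⁻¹.mulVec a)⁻¹ := by
  set c := star a ⬝ᵥ R⁻¹ *ᵥ a
  have hc : c ≠ 0 := (hR.inv.dotProduct_mulVec_pos ha).ne'
  have hRw : R *ᵥ wstar = c⁻¹ • a := by
    rw [hw, mulVec_smul, mulVec_mulVec,
      mul_nonsing_inv _ ((isUnit_iff_isUnit_det R).mp hR.isUnit), one_mulVec]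
  have hconstr : star wstar ⬝ᵥ a = 1 := by
    rw [star_dotProduct, hw, dotProduct_smul, smul_eq_mul, inv_mul_cancel₀ hc, star_one]
  have hvalue : star wstar ⬝ᵥ R *ᵥ wstar = c⁻¹ := by
    rw [hRw, dotProduct_smul, hconstr, smul_eq_mul, mul_one]
  refine ⟨hconstr, fun w hwa => ?_, hvalue⟩
  exact (Complex.le_def.mp
    (hR.posSemidef.dotProduct_mulVec_le_of_mulVec_eq_smul hRw (hwa.trans hconstr.symm))).1

theorem stmt_14 (M : ℕ) (hM : 0 < M) (R : Matrix (Fin M) (Fin M) ℂ)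
    (hR : R.PosDef) (a : Fin M → ℂ) (ha : a ≠ 0)
    (wstar : Fin M → ℂ)
    (hw : wstar = (star a ⬝ᵥ R⁻¹.mulVec a)⁻¹ • R⁻¹.mulVec a) :
    star wstar ⬝ᵥ a = 1 ∧
    (∀ w : Fin M → ℂ, star w ⬝ᵥ a = 1 →
      (star wstar ⬝ᵥ R.mulVec wstar).re ≤ (star w ⬝ᵥ R.mulVec w).re) ∧
    star wstar ⬝ᵥ R.mulVec wstar = (star a ⬝ᵥ R⁻¹.mulVec a)⁻¹ :=
  stmt_14_general M R hR a ha wstar hw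
end
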